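/- For δ ≥ 1, define F_δ = (n ↦ d_k(δn)) ⋆ μ^k (Dirichlet convolution with Popovici's function). Then F_δ(n) = 0 unless n divides δ^{k-1}. -/

import Mathlib

open scoped BigOperators

/-- The `k`-fold divisor function, as the `k`-th Dirichlet-convolution power of `ζ`. -/
def dk (k : ℕ) : ArithmeticFunction ℕ := (ArithmeticFunction.zeta) ^ k

/-- Popovici's function `μ^k`: the `k`-fold Dirichlet-convolution power of the Möbius function. -/
def mupow (k : ℕ) : ArithmeticFunction ℤ := (ArithmeticFunction.moebius) ^ k

/-- `F_δ = (n ↦ d_k(δn)) ⋆ μ^k`. -/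
def Fdelta (k δ : ℕ) (n : ℕ) : ℤ :=
  ∑ x ∈ n.divisorsAntidiagonal, (dk k (δ * x.1) : ℤ) * mupow k x.2

/-!
`F_δ(n)` is multiplicative jointly in `(δ, n)`, so if `n ∤ δ ^ (k - 1)` it has a factor
`F_{p^e}(p^m)` with `m > (k - 1) e`. For `e = 0` this is `(d_k ⋆ μ^k)(p^m) = ε(p^m) = 0`.
For `e ≥ 1` we get `m ≥ k`, and since `μ^k(p^j) = 0` for `j > k`, `F_{p^e}(p^m)` is the full
convolution `(d_k ⋆ μ^k)(p^(e+m)) = ε(p^(e+m)) = 0`.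
-/

open ArithmeticFunction Finset

theorem Nat.Coprime.sum_divisors_mul_eq_sum_sum {M : Type*} [AddCommMonoid M] {m n : ℕ}
    (hmn : m.Coprime n) (f : ℕ → M) :
    ∑ d ∈ (m * n).divisors, f d = ∑ a ∈ m.divisors, ∑ b ∈ n.divisors, f (a * b) := by
  rw [hmn.divisors_mul, sum_map, ← sum_product']
  exact sum_attach _ fun x : ℕ × ℕ => f (x.1 * x.2)

theorem Nat.sum_divisorsAntidiagonal_prime_pow {M : Type*} [AddCommMonoid M] {p : ℕ}
    (hp : p.Prime) (m : ℕ) (f : ℕ → ℕ → M) :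
    ∑ x ∈ (p ^ m).divisorsAntidiagonal, f x.1 x.2 =
      ∑ i ∈ range (m + 1), f (p ^ i) (p ^ (m - i)) := by
  rw [Nat.sum_divisorsAntidiagonal f, Nat.sum_divisors_prime_pow hp]
  refine sum_congr rfl fun i hi => ?_
  rw [Nat.pow_div (Nat.lt_succ_iff.mp (mem_range.mp hi)) hp.pos]

namespace ArithmeticFunction

theorem natCoe_pow {R : Type*} [Semiring R] (f : ArithmeticFunction ℕ) (k : ℕ) :
    ((f ^ k : ArithmeticFunction ℕ) : ArithmeticFunction R) = (f : ArithmeticFunction R) ^ k := by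
  induction k with
  | zero => simp [natCoe_one]
  | succ k ih => rw [pow_succ, pow_succ, natCoe_mul, ih]

theorem mul_apply_prime_pow {R : Type*} [Semiring R] (f g : ArithmeticFunction R) {p : ℕ}
    (hp : p.Prime) (j : ℕ) :
    (f * g) (p ^ j) = ∑ i ∈ range (j + 1), f (p ^ i) * g (p ^ (j - i)) := by
  rw [mul_apply, Nat.sum_divisorsAntidiagonal_prime_pow hp j (fun a b => f a * g b)]

theorem mul_apply_prime_pow_eq_zero {R : Type*} [Semiring R] {f g : ArithmeticFunction R}
    {p a b j : ℕ} (hp : p.Prime) (hf : ∀ i, a < i → f (p ^ i) = 0)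
    (hg : ∀ i, b < i → g (p ^ i) = 0) (hj : a + b < j) : (f * g) (p ^ j) = 0 := by
  rw [mul_apply_prime_pow f g hp]
  refine sum_eq_zero fun i hi => ?_
  rcases lt_or_ge a i with hi' | hi'
  · rw [hf i hi', zero_mul]
  · rw [hg (j - i) (by omega), mul_zero]

end ArithmeticFunction

theorem dk_mul_mupow (k : ℕ) :
    ((dk k : ArithmeticFunction ℕ) : ArithmeticFunction ℤ) * mupow k = 1 := by
  rw [dk, mupow, natCoe_pow, ← mul_pow, coe_zeta_mul_moebius, one_pow]

theorem isMultiplicative_dk (k : ℕ) : (dk k).IsMultiplicative :=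
  isMultiplicative_zeta.pow

theorem isMultiplicative_mupow (k : ℕ) : (mupow k).IsMultiplicative :=
  isMultiplicative_moebius.pow

theorem mupow_apply_prime_pow_eq_zero {k p j : ℕ} (hp : p.Prime) (hj : k < j) :
    mupow k (p ^ j) = 0 := by
  induction k generalizing j with
  | zero => exact one_apply_ne (Nat.one_lt_pow (by omega) hp.one_lt).ne'
  | succ k ih =>
    rw [mupow, pow_succ]
    refine mul_apply_prime_pow_eq_zero hp (fun _ => ih) (fun i hi => ?_) hj
    rw [moebius_apply_prime_pow hp (by omega), if_neg (by omega)]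

theorem Fdelta_eq_sum_divisors (k δ n : ℕ) :
    Fdelta k δ n = ∑ a ∈ n.divisors, (dk k (δ * a) : ℤ) * mupow k (n / a) :=
  Nat.sum_divisorsAntidiagonal fun a b => (dk k (δ * a) : ℤ) * mupow k b

theorem Fdelta_mul_mul (k : ℕ) {a b m n : ℕ} (h : (a * m).Coprime (b * n)) :
    Fdelta k (a * b) (m * n) = Fdelta k a m * Fdelta k b n := by
  have hmn : m.Coprime n := h.coprime_mul_left.coprime_mul_left_right
  rw [Fdelta_eq_sum_divisors, hmn.sum_divisors_mul_eq_sum_sum, Fdelta_eq_sum_divisors,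
    Fdelta_eq_sum_divisors, sum_mul_sum]
  refine sum_congr rfl fun x hx => sum_congr rfl fun y hy => ?_
  have hx : x ∣ m := Nat.dvd_of_mem_divisors hx
  have hy : y ∣ n := Nat.dvd_of_mem_divisors hy
  have hdk : (a * x).Coprime (b * y) :=
    (h.coprime_dvd_left (mul_dvd_mul_left a hx)).coprime_dvd_right (mul_dvd_mul_left b hy)
  have hmu : (m / x).Coprime (n / y) :=
    (hmn.coprime_dvd_left (Nat.div_dvd_of_dvd hx)).coprime_dvd_right (Nat.div_dvd_of_dvd hy)
  rw [← Nat.div_mul_div_comm hx hy, (isMultiplicative_mupow k).map_mul_of_coprime hmu,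
    show a * b * (x * y) = a * x * (b * y) by ring, (isMultiplicative_dk k).map_mul_of_coprime hdk]
  push_cast
  ring

theorem Fdelta_one_apply (k n : ℕ) : Fdelta k 1 n = (1 : ArithmeticFunction ℤ) n := by
  simp [← dk_mul_mupow k, Fdelta, mul_apply, natCoe_apply]

theorem Fdelta_prime_pow_eq_zero (k : ℕ) {p e m : ℕ} (hp : p.Prime) (h : (k - 1) * e < m) :
    Fdelta k (p ^ e) (p ^ m) = 0 := by
  have hne : ∀ j, 0 < j → p ^ j ≠ 1 := fun j hj => (Nat.one_lt_pow hj.ne' hp.one_lt).ne'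
  rcases Nat.eq_zero_or_pos e with rfl | he
  · rw [pow_zero, Fdelta_one_apply, one_apply_ne (hne m (by omega))]
  have hkm : k ≤ m := by have := Nat.le_mul_of_pos_right (k - 1) he; omega
  set D : ArithmeticFunction ℤ := ↑(dk k)
  have hlow : ∑ i ∈ range e, D (p ^ i) * mupow k (p ^ (e + m - i)) = 0 :=
    sum_eq_zero fun i hi => by
      rw [mupow_apply_prime_pow_eq_zero hp (by simp at hi; omega), mul_zero]
  calc Fdelta k (p ^ e) (p ^ m)
      = ∑ i ∈ range (m + 1), D (p ^ (e + i)) * mupow k (p ^ (e + m - (e + i))) := by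
        rw [Fdelta, Nat.sum_divisorsAntidiagonal_prime_pow hp m
          (fun a b => (dk k (p ^ e * a) : ℤ) * mupow k b)]
        simp only [D, natCoe_apply, pow_add, Nat.add_sub_add_left]
    _ = (D * mupow k) (p ^ (e + m)) := by
        rw [mul_apply_prime_pow _ _ hp, add_assoc, sum_range_add _ e (m + 1), hlow, zero_add]
    _ = 0 := by rw [dk_mul_mupow, one_apply_ne (hne _ (by omega))]

theorem stmt4 (k δ : ℕ) (hδ : 1 ≤ δ) (n : ℕ) (h : ¬ n ∣ δ ^ (k - 1)) :
    Fdelta k δ n = 0 := by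
  rcases eq_or_ne n 0 with rfl | hn
  · simp [Fdelta]
  have hδ0 : δ ≠ 0 := by omega
  obtain ⟨p, hp, hpn⟩ :
      ∃ p, p.Prime ∧ (k - 1) * δ.factorization p < n.factorization p := by
    rw [← Nat.factorization_prime_le_iff_dvd hn (pow_ne_zero _ hδ0)] at h
    push Not at h
    simpa using h
  have hp' : p.Coprime (δ / p ^ δ.factorization p * (n / p ^ n.factorization p)) :=
    (Nat.coprime_ordCompl hp hδ0).mul_right (Nat.coprime_ordCompl hp hn)
  rw [← Nat.ordProj_mul_ordCompl_eq_self δ p, ← Nat.ordProj_mul_ordCompl_eq_self n p,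
    Fdelta_mul_mul k ((hp'.pow_left _).mul_left (hp'.pow_left _)),
    Fdelta_prime_pow_eq_zero k hp hpn, zero_mul]
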